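/- arXiv:2102.01237 — 2 statements merged into one kernel-verified Lean document; each statement's English description precedes it below -/
import Mathlib

section
/- The set of extreme points of the Minkowski sum C_n + ◇^n = [−1,1]^n + conv{±e_1,…,±e_n} is exactly the set of points x ∈ ℝ^n for which there exists an index j with |x_j| = 2 and |x_i| = 1 for all i ≠ j (equivalently, the orbit of the point 2e_1 + e_2 + ⋯ + e_n under all signed permutations of the coordinates). -/
open scoped BigOperators Pointwise

/-- The `i`-th standard basis vector of `ℝ^n`. -/
noncomputable def stdVec (n : ℕ) (i : Fin n) : Fin n → ℝ := Pi.single i 1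

/-- The regular cube `C_n = [-1,1]^n`. -/
def regCube (n : ℕ) : Set (Fin n → ℝ) := {x | ∀ i, |x i| ≤ 1}

/-- The cross-polytope `◇^n = conv{±e_1, …, ±e_n}`. -/
noncomputable def crossPoly (n : ℕ) : Set (Fin n → ℝ) :=
  convexHull ℝ {x | ∃ i : Fin n, x = stdVec n i ∨ x = -stdVec n i}

/-!
Write `excess t = max (|t| - 1) 0` for the distance from `t` to `[-1, 1]`. The cross-polytope is
the `ℓ¹` unit ball, so clamping every coordinate to `[-1, 1]` shows
`C_n + ◇^n = {x | ∑ i, excess (x i) ≤ 1}`. At an extreme point `x` of this body every `|xᵢ| ≥ 1`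
and the total excess is `1`, since otherwise one coordinate can be moved both ways; and at most
one coordinate carries excess, since otherwise excess can be traded between two of them in either
direction. Hence one coordinate has `|xⱼ| = 2` and the others `|xᵢ| = 1`. Conversely such a point
is the unique maximiser of `w ↦ ∑ i, xᵢ * wᵢ` on the body, so it is exposed.
-/

lemma convexOn_sum_abs (ι : Type*) [Fintype ι] :
    ConvexOn ℝ Set.univ (fun d : ι → ℝ => ∑ i, |d i|) := by
  rw [← Finset.sum_fn]
  exact Finset.sum_induction _ (ConvexOn ℝ Set.univ) (fun _ _ => ConvexOn.add)
    (convexOn_const 0 convex_univ) fun i _ =>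
      (convexOn_norm convex_univ).comp_linearMap (LinearMap.proj (R := ℝ) (φ := fun _ : ι => ℝ) i)

lemma sum_abs_le_one_of_mem_crossPoly {n : ℕ} {d : Fin n → ℝ} (hd : d ∈ crossPoly n) :
    ∑ i, |d i| ≤ 1 := by
  refine (convexHull_min ?_ ((convexOn_sum_abs (Fin n)).convex_le 1)) hd |>.2
  rintro _ ⟨i, rfl | rfl⟩ <;> simp [stdVec, Pi.single_apply, apply_ite]

lemma smul_stdVec_mem_crossPoly {n : ℕ} (i : Fin n) {c : ℝ} (hc : |c| ≤ 1) :
    c • stdVec n i ∈ crossPoly n := by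
  refine segment_subset_convexHull (s := {x | ∃ j : Fin n, x = stdVec n j ∨ x = -stdVec n j})
    ⟨i, Or.inr rfl⟩ ⟨i, Or.inl rfl⟩ ⟨(1 - c) / 2, (1 + c) / 2, ?_, ?_, by ring, by module⟩
  · linarith [(abs_le.1 hc).2]
  · linarith [(abs_le.1 hc).1]

lemma mem_crossPoly_of_sum_abs_le_one {n : ℕ} [NeZero n] {d : Fin n → ℝ}
    (hd : ∑ i, |d i| ≤ 1) : d ∈ crossPoly n := by
  -- put the slack `1 - ∑ |dᵢ|` on the coordinate `0`, so that the weights sum to `1`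
  set w : Fin n → ℝ := fun i => |d i| + if i = 0 then 1 - ∑ j, |d j| else 0
  have hdw : ∀ i, |d i| ≤ w i := fun i => le_add_of_nonneg_right (by split_ifs <;> linarith)
  have hw : ∑ i, w i = 1 := by simp [w, Finset.sum_add_distrib]
  have hcomb : ∑ i, w i • ((d i / w i) • stdVec n i) = d := by
    conv_rhs => rw [← Finset.univ_sum_single d]
    refine Finset.sum_congr rfl fun i _ => ?_
    rcases eq_or_ne (w i) 0 with h | h
    · have : d i = 0 := abs_eq_zero.1 (le_antisymm (h ▸ hdw i) (abs_nonneg _))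
      simp [h, this]
    · rw [smul_smul, mul_div_cancel₀ _ h, stdVec, ← Pi.single_smul, smul_eq_mul, mul_one]
  rw [← hcomb]
  refine (convex_convexHull ℝ _).sum_mem (fun i _ => (abs_nonneg _).trans (hdw i)) hw
    fun i _ => smul_stdVec_mem_crossPoly i ?_
  rw [abs_div, abs_of_nonneg ((abs_nonneg _).trans (hdw i))]
  exact div_le_one_of_le₀ (hdw i) ((abs_nonneg _).trans (hdw i))

lemma mem_crossPoly_iff {n : ℕ} [NeZero n] {d : Fin n → ℝ} :
    d ∈ crossPoly n ↔ ∑ i, |d i| ≤ 1 :=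
  ⟨sum_abs_le_one_of_mem_crossPoly, mem_crossPoly_of_sum_abs_le_one⟩

noncomputable def excess (t : ℝ) : ℝ := max (|t| - 1) 0

lemma excess_nonneg (t : ℝ) : 0 ≤ excess t := le_max_right _ _

lemma excess_eq_zero {t : ℝ} (ht : |t| ≤ 1) : excess t = 0 := max_eq_right (by linarith)

lemma excess_of_one_le_abs {t : ℝ} (ht : 1 ≤ |t|) : excess t = |t| - 1 :=
  max_eq_left (by linarith)

lemma excess_pos_iff {t : ℝ} : 0 < excess t ↔ 1 < |t| := by
  simp [excess]

lemma abs_le_one_add_excess (t : ℝ) : |t| ≤ 1 + excess t :=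
  sub_le_iff_le_add'.1 (le_max_left _ _)

lemma excess_add_le (s t : ℝ) : excess (s + t) ≤ excess s + |t| :=
  max_le (by linarith [abs_add_le s t, abs_le_one_add_excess s])
    (add_nonneg (excess_nonneg s) (abs_nonneg t))

lemma abs_sub_clamp (t : ℝ) : |t - max (-1) (min 1 t)| = excess t := by
  rcases le_or_gt 1 |t| with ht | ht
  · rw [excess_of_one_le_abs ht]
    rcases le_abs'.1 ht with h | h
    · rw [min_eq_right (by linarith), max_eq_left h, abs_of_nonpos (by linarith),
        abs_of_nonpos (by linarith)]
      ring
    · rw [min_eq_left h, max_eq_right (by norm_num), abs_of_nonneg (by linarith),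
        abs_of_nonneg (by linarith)]
  · obtain ⟨h₁, h₂⟩ := abs_lt.1 ht
    rw [excess_eq_zero ht.le, min_eq_right h₂.le, max_eq_right h₁.le, sub_self, abs_zero]

lemma excess_add_mul_sign {t c : ℝ} (ht : 1 ≤ |t|) (hc : 1 - |t| ≤ c) :
    excess (t + c * Real.sign t) = excess t + c := by
  have habs : |t + c * Real.sign t| = |t| + c := by
    rcases lt_or_gt_of_ne (abs_pos.1 (one_pos.trans_le ht)) with h | h
    · rw [Real.sign_of_neg h, abs_of_neg h] at *
      rw [abs_of_nonpos (by linarith)]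
      ring
    · rw [Real.sign_of_pos h, abs_of_pos h] at *
      rw [abs_of_nonneg (by linarith)]
      ring
  rw [excess_of_one_le_abs ht, excess_of_one_le_abs (by linarith), habs]
  ring

lemma eq_zero_of_add_mem_of_sub_mem {E : Type*} [AddCommGroup E] [Module ℝ E] {A : Set E}
    {x v : E} (hx : x ∈ A.extremePoints ℝ) (h_add : x + v ∈ A) (h_sub : x - v ∈ A) :
    v = 0 := by
  have hmid : x ∈ openSegment ℝ (x + v) (x - v) :=
    ⟨1 / 2, 1 / 2, by norm_num, by norm_num, by norm_num, by module⟩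
  simpa using hx.2 h_add h_sub hmid

lemma nonpos_of_forall_add_single_mem {ι : Type*} [DecidableEq ι] {A : Set (ι → ℝ)}
    {x : ι → ℝ} (hx : x ∈ A.extremePoints ℝ) {k : ι} {ε : ℝ}
    (h : ∀ δ, |δ| ≤ ε → x + Pi.single k δ ∈ A) : ε ≤ 0 := by
  by_contra! hε
  have h_sub : x - Pi.single k ε ∈ A := by
    rw [sub_eq_add_neg, ← Pi.single_neg]
    exact h (-ε) (by rw [abs_neg, abs_of_pos hε])
  have := eq_zero_of_add_mem_of_sub_mem hx (h ε (abs_of_pos hε).le) h_sub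
  exact hε.ne' (by simpa using this)

def excessBall (ι : Type*) [Fintype ι] : Set (ι → ℝ) := {x | ∑ i, excess (x i) ≤ 1}

variable {ι : Type*} [Fintype ι]

lemma mem_excessBall {x : ι → ℝ} : x ∈ excessBall ι ↔ ∑ i, excess (x i) ≤ 1 := Iff.rfl

lemma regCube_add_crossPoly {n : ℕ} [NeZero n] :
    regCube n + crossPoly n = excessBall (Fin n) := by
  ext x
  rw [mem_excessBall]
  constructor
  · rintro ⟨c, hc, d, hd, rfl⟩
    calc ∑ i, excess ((c + d) i) ≤ ∑ i, |d i| := Finset.sum_le_sum fun i _ => by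
          simpa [excess_eq_zero (hc i)] using excess_add_le (c i) (d i)
      _ ≤ 1 := mem_crossPoly_iff.1 hd
  · intro hx
    refine ⟨fun i => max (-1) (min 1 (x i)), fun i => abs_le.2 ⟨le_max_left _ _,
      max_le (by norm_num) (min_le_left _ _)⟩, x - fun i => max (-1) (min 1 (x i)), ?_,
      add_sub_cancel _ _⟩
    rw [mem_crossPoly_iff]
    simpa [abs_sub_clamp] using hx

lemma eq_of_abs_le_of_sum_mul_self_le {x w : ι → ℝ} (habs : ∀ i, |w i| ≤ |x i|)
    (h : ∑ i, x i * x i ≤ ∑ i, x i * w i) : w = x := by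
  have hsq : ∀ i ∈ Finset.univ, 0 ≤ (w i - x i) ^ 2 := fun i _ => sq_nonneg _
  have hww : ∑ i, (w i * w i - x i * x i) ≤ 0 := Finset.sum_nonpos fun i _ => by
    rw [sub_nonpos, ← abs_mul_abs_self (w i), ← abs_mul_abs_self (x i)]
    exact mul_self_le_mul_self (abs_nonneg _) (habs i)
  have hexpand : ∑ i, (w i - x i) ^ 2 =
      ∑ i, (w i * w i - x i * x i) + 2 * (∑ i, x i * x i - ∑ i, x i * w i) := by
    rw [← Finset.sum_sub_distrib, Finset.mul_sum, ← Finset.sum_add_distrib]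
    exact Finset.sum_congr rfl fun i _ => by ring
  have hzero := (Finset.sum_eq_zero_iff_of_nonneg hsq).1
    (le_antisymm (by linarith) (Finset.sum_nonneg hsq))
  funext i
  exact sub_eq_zero.1 (pow_eq_zero_iff two_ne_zero |>.1 (hzero i (Finset.mem_univ i)))

variable [DecidableEq ι]

lemma sum_excess_add_single (x : ι → ℝ) (k : ι) (δ : ℝ) :
    ∑ i, excess ((x + Pi.single k δ : ι → ℝ) i) =
      ∑ i, excess (x i) + (excess (x k + δ) - excess (x k)) := by
  rw [← sub_eq_iff_eq_add', ← Finset.sum_sub_distrib, Fintype.sum_eq_single k]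
  · simp
  · intro i hi
    simp [hi]

section extremePoints

variable {x : ι → ℝ} (hx : x ∈ (excessBall ι).extremePoints ℝ)
include hx

lemma one_le_abs_of_mem_extremePoints (k : ι) : 1 ≤ |x k| := by
  suffices 1 - |x k| ≤ 0 by linarith
  refine nonpos_of_forall_add_single_mem (k := k) hx fun δ hδ => ?_
  have hk : |x k + δ| ≤ 1 := by linarith [abs_add_le (x k) δ]
  rw [mem_excessBall, sum_excess_add_single, excess_eq_zero hk,
    excess_eq_zero (by linarith [abs_nonneg δ])]
  simpa using mem_excessBall.1 hx.1

lemma sum_excess_eq_one_of_mem_extremePoints [Nonempty ι] : ∑ i, excess (x i) = 1 := by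
  obtain ⟨k⟩ := ‹Nonempty ι›
  suffices 1 - ∑ i, excess (x i) ≤ 0 by linarith [mem_excessBall.1 hx.1]
  refine nonpos_of_forall_add_single_mem (k := k) hx fun δ hδ => ?_
  rw [mem_excessBall, sum_excess_add_single]
  linarith [excess_add_le (x k) δ]

lemma eq_of_one_lt_abs_of_mem_extremePoints {k l : ι} (hk : 1 < |x k|) (hl : 1 < |x l|) :
    k = l := by
  by_contra hkl
  set ε := min (|x k| - 1) (|x l| - 1)
  -- moving `δ` of excess from coordinate `l` to coordinate `k` keeps the total excess fixed
  set v : ℝ → ι → ℝ := fun δ =>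
    Pi.single k (δ * Real.sign (x k)) + Pi.single l (-δ * Real.sign (x l))
  have hv : ∀ δ, |δ| ≤ ε → x + v δ ∈ excessBall ι := by
    intro δ hδ
    have hδk : |δ| ≤ |x k| - 1 := hδ.trans (min_le_left _ _)
    have hδl : |δ| ≤ |x l| - 1 := hδ.trans (min_le_right _ _)
    rw [mem_excessBall, ← add_assoc, sum_excess_add_single, sum_excess_add_single]
    simp only [Pi.add_apply, Pi.single_eq_of_ne (Ne.symm hkl), add_zero]
    rw [excess_add_mul_sign hk.le (by linarith [neg_abs_le δ]),
      excess_add_mul_sign hl.le (by linarith [le_abs_self δ])]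
    linarith [mem_excessBall.1 hx.1]
  have hε : 0 < ε := lt_min (by linarith) (by linarith)
  have h_sub : x - v ε ∈ excessBall ι := by
    convert hv (-ε) (by rw [abs_neg, abs_of_pos hε]) using 1
    simp only [v, neg_mul, neg_neg, Pi.single_neg]
    abel
  have hv0 := congrFun (eq_zero_of_add_mem_of_sub_mem hx (hv ε (abs_of_pos hε).le) h_sub) k
  simp [v, Pi.single_eq_of_ne hkl, hε.ne', Real.sign_eq_zero_iff] at hv0
  norm_num [hv0] at hk

lemma exists_abs_eq_two_of_mem_extremePoints [Nonempty ι] :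
    ∃ j, |x j| = 2 ∧ ∀ i, i ≠ j → |x i| = 1 := by
  have hsum := sum_excess_eq_one_of_mem_extremePoints hx
  obtain ⟨j, hj⟩ : ∃ j, 0 < excess (x j) := by
    by_contra! h
    simp [le_antisymm (h _) (excess_nonneg _)] at hsum
  have hj' := excess_pos_iff.1 hj
  have hother : ∀ i, i ≠ j → |x i| ≤ 1 := fun i hij => not_lt.1 fun hi =>
    hij (eq_of_one_lt_abs_of_mem_extremePoints hx hi hj')
  rw [Fintype.sum_eq_single j fun i hij => excess_eq_zero (hother i hij),
    excess_of_one_le_abs hj'.le] at hsum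
  exact ⟨j, by linarith, fun i hij =>
    le_antisymm (hother i hij) (one_le_abs_of_mem_extremePoints hx i)⟩

end extremePoints

section exposedPoints

variable {x : ι → ℝ} {j : ι} (hj : |x j| = 2) (hi : ∀ i, i ≠ j → |x i| = 1)
include hj hi

lemma sum_mul_le_sum_abs_add_excess (w : ι → ℝ) :
    ∑ i, x i * w i ≤ ∑ i, |x i| + ∑ i, excess (w i) + excess (w j) := by
  have hcoord : ∀ i, x i * w i ≤ |x i| + excess (w i) + if i = j then excess (w j) else 0 := by
    intro i
    have h1 : x i * w i ≤ |x i| * (1 + excess (w i)) := by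
      refine (le_abs_self _).trans ?_
      rw [abs_mul]
      exact mul_le_mul_of_nonneg_left (abs_le_one_add_excess _) (abs_nonneg _)
    split_ifs with h
    · subst h; rw [hj] at h1; linarith
    · rw [hi i h] at h1 ⊢; linarith
  calc ∑ i, x i * w i
      ≤ ∑ i, (|x i| + excess (w i) + if i = j then excess (w j) else 0) :=
        Finset.sum_le_sum fun i _ => hcoord i
    _ = ∑ i, |x i| + ∑ i, excess (w i) + excess (w j) := by simp [Finset.sum_add_distrib]

lemma mem_exposedPoints_excessBall : x ∈ (excessBall ι).exposedPoints ℝ := by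
  have hmem : x ∈ excessBall ι := by
    rw [mem_excessBall, Fintype.sum_eq_single j fun i h => excess_eq_zero (hi i h).le,
      excess_of_one_le_abs (by rw [hj]; norm_num), hj]
    norm_num
  have hxx : ∑ i, x i * x i = ∑ i, |x i| + 2 := by
    have hcoord : ∀ i, x i * x i = |x i| + if i = j then 2 else 0 := by
      intro i
      rw [← abs_mul_abs_self]
      split_ifs with h
      · rw [h, hj]; norm_num
      · rw [hi i h]; norm_num
    simp [hcoord, Finset.sum_add_distrib]
  refine ⟨hmem, ∑ i, x i • ContinuousLinearMap.proj i, fun w hw => ?_⟩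
  simp only [FunLike.coe_sum, FunLike.coe_smul, Finset.sum_apply, Pi.smul_apply,
    ContinuousLinearMap.proj_apply, smul_eq_mul]
  have hbound := sum_mul_le_sum_abs_add_excess hj hi w
  have he : ∀ i, excess (w i) ≤ ∑ i, excess (w i) := fun i =>
    Finset.single_le_sum (fun i _ => excess_nonneg (w i)) (Finset.mem_univ i)
  have hw1 := mem_excessBall.1 hw
  refine ⟨by linarith [he j], fun h => eq_of_abs_le_of_sum_mul_self_le (fun i => ?_) h⟩
  rcases eq_or_ne i j with rfl | hij
  · linarith [abs_le_one_add_excess (w i), he i]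
  · have := Finset.add_le_sum (fun i _ => excess_nonneg (w i)) (Finset.mem_univ i)
      (Finset.mem_univ j) hij
    linarith [abs_le_one_add_excess (w i), hi i hij]

end exposedPoints

/-- The extreme points of the Minkowski sum `C_{n+1} + ◇^{n+1}` are
exactly the points with one coordinate of absolute value `2` and all other coordinates
of absolute value `1` (the signed-permutation orbit of `2e_1 + e_2 + ⋯ + e_{n+1}`). -/
theorem extremePoints_cube_add_crossPoly (n : ℕ) :
    Set.extremePoints ℝ (regCube (n + 1) + crossPoly (n + 1)) =
      {x : Fin (n + 1) → ℝ | ∃ j, |x j| = 2 ∧ ∀ i, i ≠ j → |x i| = 1} := by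
  rw [regCube_add_crossPoly]
  ext x
  exact ⟨fun hx => exists_abs_eq_two_of_mem_extremePoints hx, fun ⟨_, hj, hi⟩ =>
    exposedPoints_subset_extremePoints (mem_exposedPoints_excessBall hj hi)⟩
end

section
/- The Minkowski sum C_n + ◇^n = [−1,1]^n + conv{±e_1,…,±e_n} admits the halfspace description C_n + ◇^n = { x ∈ ℝ^n : Σ_{i=1}^n ε_i x_i ≤ |supp(ε)| + 1 for every nonzero sign vector ε ∈ {−1,0,1}^n }. -/
open scoped BigOperators Pointwise

lemma crossPoly_eq (n : ℕ) :
    crossPoly (n + 1) = {d : Fin (n + 1) → ℝ | ∑ i, |d i| ≤ 1} := by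
  apply Set.Subset.antisymm
  · apply convexHull_min
    · rintro d ⟨i, h | h⟩ <;> subst h <;>
        simp [stdVec, Pi.single_apply, apply_ite abs, Finset.sum_ite_eq']
    · intro a ha b hb s t hs ht hst
      simp only [Set.mem_setOf_eq] at *
      calc ∑ i, |s • a i + t • b i| ≤ ∑ i, (s * |a i| + t * |b i|) := by
            refine Finset.sum_le_sum fun i _ => ?_
            calc |s • a i + t • b i| ≤ |s * a i| + |t * b i| := by
                  simpa [smul_eq_mul] using abs_add_le (s * a i) (t * b i)
              _ = s * |a i| + t * |b i| := by
                  rw [abs_mul, abs_mul, abs_of_nonneg hs, abs_of_nonneg ht]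
        _ = s * (∑ i, |a i|) + t * (∑ i, |b i|) := by
            rw [Finset.sum_add_distrib, Finset.mul_sum, Finset.mul_sum]
        _ ≤ s * 1 + t * 1 := by
            gcongr
        _ = 1 := by linarith
  · intro d hd
    simp only [Set.mem_setOf_eq] at hd
    set S : Set (Fin (n + 1) → ℝ) :=
      {x | ∃ i : Fin (n + 1), x = stdVec (n + 1) i ∨ x = -stdVec (n + 1) i} with hS
    have h0 : (0 : Fin (n + 1) → ℝ) ∈ convexHull ℝ S := by
      have h1 : stdVec (n + 1) 0 ∈ convexHull ℝ S := subset_convexHull ℝ S ⟨0, Or.inl rfl⟩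
      have h2 : -stdVec (n + 1) 0 ∈ convexHull ℝ S := subset_convexHull ℝ S ⟨0, Or.inr rfl⟩
      have := (convex_convexHull ℝ S) h1 h2 (by norm_num : (0:ℝ) ≤ 1/2)
        (by norm_num : (0:ℝ) ≤ 1/2) (by norm_num)
      simpa [smul_neg] using this
    set w : Option (Fin (n + 1)) → ℝ := fun o => o.elim (1 - ∑ i, |d i|) (fun i => |d i|)
    set z : Option (Fin (n + 1)) → (Fin (n + 1) → ℝ) :=
      fun o => o.elim 0 (fun i => if 0 ≤ d i then stdVec (n + 1) i else -stdVec (n + 1) i)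
    have hmem : ∑ o : Option (Fin (n + 1)), w o • z o ∈ convexHull ℝ S := by
      refine (convex_convexHull ℝ S).sum_mem ?_ ?_ ?_
      · rintro (_ | i) _
        · simpa [w] using hd
        · simp [w, abs_nonneg]
      · rw [Fintype.sum_option]
        simp [w]
      · rintro (_ | i) _
        · exact h0
        · by_cases h : 0 ≤ d i
          · simpa [z, h] using subset_convexHull ℝ S ⟨i, Or.inl rfl⟩
          · simpa [z, h] using subset_convexHull ℝ S ⟨i, Or.inr rfl⟩
    have heq : ∑ o : Option (Fin (n + 1)), w o • z o = d := by
      rw [Fintype.sum_option]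
      funext j
      simp only [w, z, Option.elim, smul_zero, zero_add]
      have : ∀ i : Fin (n + 1),
          (|d i| • (if 0 ≤ d i then stdVec (n + 1) i else -stdVec (n + 1) i)) j
            = d i * (Pi.single i (1:ℝ) : Fin (n+1) → ℝ) j := by
        intro i
        by_cases h : 0 ≤ d i
        · simp [h, stdVec, abs_of_nonneg h, mul_comm]
        · simp [h, stdVec, abs_of_neg (lt_of_not_ge h), mul_comm]
      calc (∑ i, |d i| • (if 0 ≤ d i then stdVec (n + 1) i else -stdVec (n + 1) i)) j
          = ∑ i, d i * (Pi.single i (1:ℝ) : Fin (n+1) → ℝ) j := by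
            rw [Finset.sum_apply]; exact Finset.sum_congr rfl fun i _ => this i
        _ = d j := by simp [Pi.single_apply]
    rw [crossPoly, ← hS, ← heq]
    exact hmem

/-- The Minkowski sum `C_{n+1} + ◇^{n+1}` is the set of points `x`
satisfying `∑ i, ε_i x_i ≤ |supp ε| + 1` for every nonzero sign vector
`ε ∈ {-1,0,1}^{n+1}`. -/
theorem cube_add_crossPoly_halfspaces (n : ℕ) :
    regCube (n + 1) + crossPoly (n + 1) =
      {x : Fin (n + 1) → ℝ | ∀ ε : Fin (n + 1) → ℤ,
        (∀ i, ε i = -1 ∨ ε i = 0 ∨ ε i = 1) → ε ≠ 0 →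
        ∑ i, (ε i : ℝ) * x i ≤ (Finset.univ.filter fun i => ε i ≠ 0).card + 1} := by
  ext x
  simp only [Set.mem_add, Set.mem_setOf_eq]
  constructor
  · rintro ⟨c, hc, d, hd, rfl⟩ ε hε hne
    have hd1 : ∑ i, |d i| ≤ 1 := by rw [crossPoly_eq] at hd; exact hd
    have hsplit : ∑ i, (ε i : ℝ) * (c + d) i
        = ∑ i, (ε i : ℝ) * c i + ∑ i, (ε i : ℝ) * d i := by
      rw [← Finset.sum_add_distrib]
      exact Finset.sum_congr rfl fun i _ => by simp [mul_add]
    have hcb : ∑ i, (ε i : ℝ) * c i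
        ≤ ((Finset.univ.filter fun i => ε i ≠ 0).card : ℝ) := by
      calc ∑ i, (ε i : ℝ) * c i ≤ ∑ i, (if ε i ≠ 0 then (1:ℝ) else 0) := by
            refine Finset.sum_le_sum fun i _ => ?_
            rcases hε i with h | h | h
            · have hci := hc i
              have h1 : (ε i : ℝ) = -1 := by rw [h]; norm_num
              rw [h1]
              simp only [h, if_pos (by norm_num : (-1:ℤ) ≠ 0)]
              nlinarith [neg_abs_le (c i), le_abs_self (c i)]
            · simp [h]
            · have hci := hc i
              have h1 : (ε i : ℝ) = 1 := by rw [h]; norm_num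
              rw [h1]
              simp only [h, if_pos (by norm_num : (1:ℤ) ≠ 0)]
              nlinarith [neg_abs_le (c i), le_abs_self (c i)]
        _ = ((Finset.univ.filter fun i => ε i ≠ 0).card : ℝ) := by
            rw [Finset.sum_boole]
    have hdb : ∑ i, (ε i : ℝ) * d i ≤ 1 := by
      refine le_trans (Finset.sum_le_sum (fun i _ => ?_)) hd1
      rcases hε i with h | h | h
      · have h1 : (ε i : ℝ) = -1 := by rw [h]; norm_num
        rw [h1]; nlinarith [neg_abs_le (d i), le_abs_self (d i)]
      · simp [h, abs_nonneg]
      · have h1 : (ε i : ℝ) = 1 := by rw [h]; norm_num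
        rw [h1]; nlinarith [neg_abs_le (d i), le_abs_self (d i)]
    rw [hsplit]; linarith
  · intro hx
    set t : Fin (n + 1) → ℝ := fun i => max (|x i| - 1) 0 with ht
    set d : Fin (n + 1) → ℝ := fun i => if 0 ≤ x i then t i else -t i with hdd
    have htnn : ∀ i, 0 ≤ t i := fun i => le_max_right _ _
    have habs : ∀ i, |d i| = t i := by
      intro i
      by_cases h0 : 0 ≤ x i <;> simp [hdd, h0, abs_of_nonneg (htnn i)]
    refine ⟨x - d, ?_, d, ?_, by abel⟩
    · intro i
      show |(x - d) i| ≤ 1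
      simp only [Pi.sub_apply]
      rcases le_or_gt (|x i|) 1 with h1 | h1
      · have ht0 : t i = 0 := max_eq_right (by linarith)
        have hd0 : d i = 0 := by by_cases h0 : 0 ≤ x i <;> simp [hdd, h0, ht0]
        simpa [hd0] using h1
      · have htv : t i = |x i| - 1 := max_eq_left (by linarith)
        rcases le_or_gt 0 (x i) with hx0 | hx0
        · have hdi : d i = x i - 1 := by
            simp [hdd, hx0, htv, abs_of_nonneg hx0]
          rw [hdi]
          norm_num
        · have hdi : d i = x i + 1 := by
            simp only [hdd, if_neg (not_le.mpr hx0), htv, abs_of_neg hx0]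
            ring
          rw [hdi]
          norm_num
    · rw [crossPoly_eq]
      show ∑ i, |d i| ≤ 1
      simp only [habs]
      by_cases hall : ∀ i, |x i| ≤ 1
      · have : ∀ i, t i = 0 := fun i => max_eq_right (by linarith [hall i])
        simp [this]
      · push_neg at hall
        obtain ⟨i0, hi0⟩ := hall
        set ε : Fin (n + 1) → ℤ :=
          fun i => if 1 < |x i| then (if 0 ≤ x i then 1 else -1) else 0 with hε
        have hεr : ∀ i, ε i = -1 ∨ ε i = 0 ∨ ε i = 1 := by
          intro i; simp only [hε]; split_ifs <;> tauto
        have hεsupp : ∀ i, ε i ≠ 0 ↔ 1 < |x i| := by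
          intro i; simp only [hε]; split_ifs <;> simp_all
        have hεne : ε ≠ 0 := by
          intro h
          have := (hεsupp i0).mpr hi0
          rw [h] at this
          exact this rfl
        have key := hx ε hεr hεne
        set F := Finset.univ.filter fun i => ε i ≠ 0 with hF
        have h1 : ∑ i, (ε i : ℝ) * x i = ∑ i ∈ F, |x i| := by
          have hz : ∀ i ∈ Finset.univ, (ε i : ℝ) * x i ≠ 0 → ε i ≠ 0 := by
            intro i _ h h0
            exact h (by simp [h0])
          rw [hF, ← Finset.sum_filter_of_ne hz]
          refine Finset.sum_congr rfl fun i hi => ?_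
          have hsup : 1 < |x i| := (hεsupp i).mp (Finset.mem_filter.mp hi).2
          by_cases h0 : 0 ≤ x i
          · have : ε i = 1 := by simp [hε, hsup, h0]
            rw [this, abs_of_nonneg h0]
            norm_num
          · have : ε i = -1 := by simp [hε, hsup, h0]
            rw [this, abs_of_neg (not_le.mp h0)]
            push_cast
            ring
        have h2 : ∑ i, t i = ∑ i ∈ F, (|x i| - 1) := by
          have hz : ∀ i ∈ Finset.univ, t i ≠ 0 → ε i ≠ 0 := by
            intro i _ h
            rw [hεsupp]
            by_contra hle
            exact h (max_eq_right (by push_neg at hle; linarith))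
          rw [hF, ← Finset.sum_filter_of_ne hz]
          refine Finset.sum_congr rfl fun i hi => ?_
          have hsup : 1 < |x i| := (hεsupp i).mp (Finset.mem_filter.mp hi).2
          exact max_eq_left (by linarith)
        have h3 : ∑ i ∈ F, (|x i| - 1) = (∑ i ∈ F, |x i|) - F.card := by
          rw [Finset.sum_sub_distrib, Finset.sum_const, nsmul_eq_mul, mul_one]
        rw [h2, h3, ← h1]
        linarith
end
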